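/- For discrete random variables, the two chain-rule expansions of H(X_0^T) = I(X_0^T; X_0^T, Y^T) yield the identity ∑_{t=1}^T I(X_{0,t}; X_0^{t−1}, Y^{t−1}, X_{0,t+1}^T) = ∑_{t=1}^T I(X_{0,t+1}^T; X_{0,t}, Y_t | X_0^{t−1}, Y^{t−1}), provided the sequence X_0^T is i.i.d. -/

import Mathlib

/-! Put `D n = H(X^{<n}, Y^{<n})` (`Hprefix`) and `G n = H(X^T, Y^{<n})` (`HstatesPrefix`).
An entropy only depends on the partition of `Ω` induced by the variable, so every joint entropy in
the `t`-th summands is `H(X_t)`, `D t`, `D (t+1)`, `G t`, `G (t+1)` or `H(X^{<t}, Y^{<t}, X^{>t})`,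
the last one occurring on both sides. The `t`-th summand on the left minus the one on the right is
therefore `H(X_t) + (D t - D (t+1)) - (G t - G (t+1))`, and the sum telescopes to
`∑ₜ H(X_t) - H(X^T)`, which vanishes because the joint law of `X^T` is the product of its
marginals. -/

open Finset

/-- Probability that the random variable `X` on the finite probability space
`(Ω, μ)` takes the value `x`. -/
noncomputable def pr {Ω α : Type*} [Fintype Ω] [DecidableEq α]
    (μ : Ω → ℝ) (X : Ω → α) (x : α) : ℝ :=
  ∑ ω, if X ω = x then μ ω else 0

/-- Shannon entropy of the random variable `X` under `μ`. -/
noncomputable def Hent {Ω α : Type*} [Fintype Ω] [Fintype α] [DecidableEq α]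
    (μ : Ω → ℝ) (X : Ω → α) : ℝ :=
  -∑ x, pr μ X x * Real.log (pr μ X x)

/-- Conditional entropy `H(X | Y)` under `μ`. -/
noncomputable def condH {Ω α β : Type*} [Fintype Ω] [Fintype α] [DecidableEq α]
    [Fintype β] [DecidableEq β] (μ : Ω → ℝ) (X : Ω → α) (Y : Ω → β) : ℝ :=
  Hent μ (fun ω => (X ω, Y ω)) - Hent μ Y

/-- Mutual information `I(X; Y)` under `μ`. -/
noncomputable def MI {Ω α β : Type*} [Fintype Ω] [Fintype α] [DecidableEq α]
    [Fintype β] [DecidableEq β] (μ : Ω → ℝ) (X : Ω → α) (Y : Ω → β) : ℝ :=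
  Hent μ X + Hent μ Y - Hent μ (fun ω => (X ω, Y ω))

/-- Conditional mutual information `I(X; Y | Z)` under `μ`. -/
noncomputable def condMI {Ω α β γ : Type*} [Fintype Ω] [Fintype α] [DecidableEq α]
    [Fintype β] [DecidableEq β] [Fintype γ] [DecidableEq γ]
    (μ : Ω → ℝ) (X : Ω → α) (Y : Ω → β) (Z : Ω → γ) : ℝ :=
  condH μ X Z + condH μ Y Z - condH μ (fun ω => (X ω, Y ω)) Z

/-- The indices strictly before `t`, as a map `Fin t.val → Fin T`. -/
def preIdx {T : ℕ} (t : Fin T) (s : Fin t.val) : Fin T :=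
  Fin.castLE t.isLt.le s

/-- The indices strictly after `t`, as a map `Fin (T - (t.val+1)) → Fin T`. -/
def sufIdx {T : ℕ} (t : Fin T) (s : Fin (T - (t.val + 1))) : Fin T :=
  ⟨t.val + 1 + s.val, by have h1 := s.isLt; have h2 := t.isLt; omega⟩

section Entropy

variable {Ω α β : Type*} [Fintype Ω]

lemma sum_pr [Fintype α] [DecidableEq α] (μ : Ω → ℝ) (X : Ω → α) :
    ∑ x, pr μ X x = ∑ ω, μ ω := by
  simp only [pr]
  rw [sum_comm]
  simp

lemma pr_comp [Fintype α] [DecidableEq α] [DecidableEq β] (μ : Ω → ℝ) (X : Ω → α)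
    (g : α → β) (y : β) :
    pr μ (fun ω => g (X ω)) y = ∑ x, if g x = y then pr μ X x else 0 := by
  simp only [pr, ite_sum_zero]
  rw [sum_comm]
  refine sum_congr rfl fun ω _ => ?_
  rw [sum_eq_single (X ω) (fun x _ hx => by simp [Ne.symm hx]) (by simp)]
  simp

lemma Hent_eq_neg_sum_mul_log_pr [Fintype α] [DecidableEq α] (μ : Ω → ℝ) (X : Ω → α) :
    Hent μ X = -∑ ω, μ ω * Real.log (pr μ X (X ω)) := by
  simp only [Hent, pr, sum_mul, ite_mul, zero_mul]
  rw [sum_comm]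
  simp

lemma Hent_congr_of_eq_iff [Fintype α] [DecidableEq α] [Fintype β] [DecidableEq β]
    (μ : Ω → ℝ) (X : Ω → α) (Y : Ω → β) (h : ∀ ω ω', X ω = X ω' ↔ Y ω = Y ω') :
    Hent μ X = Hent μ Y := by
  simp only [Hent_eq_neg_sum_mul_log_pr, pr, h]

lemma Hent_prod_comm [Fintype α] [DecidableEq α] [Fintype β] [DecidableEq β]
    (μ : Ω → ℝ) (X : Ω → α) (Y : Ω → β) :
    Hent μ (fun ω => (X ω, Y ω)) = Hent μ (fun ω => (Y ω, X ω)) :=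
  Hent_congr_of_eq_iff μ _ _ fun ω ω' => by simp only [Prod.ext_iff, and_comm]

lemma Hent_of_subsingleton [Fintype α] [DecidableEq α] [Subsingleton α]
    (μ : Ω → ℝ) (hμ : ∑ ω, μ ω = 1) (X : Ω → α) : Hent μ X = 0 := by
  have hX : ∀ ω ω', X ω' = X ω ↔ True := fun _ _ => iff_of_true (Subsingleton.elim _ _) trivial
  simp [Hent_eq_neg_sum_mul_log_pr, pr, hX, hμ]

end Entropy

lemma Fintype.sum_prod_mul_apply {ι α R : Type*} [Fintype ι] [DecidableEq ι] [Fintype α]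
    [CommSemiring R] (p : ι → α → R) (t : ι) (h : α → R) :
    ∑ f : ι → α, (∏ s, p s (f s)) * h (f t)
      = (∑ a, p t a * h a) * ∏ s ∈ univ.erase t, ∑ a, p s a := by
  let q : ι → α → R := Function.update p t fun a => p t a * h a
  have hq : ∀ s ∈ univ.erase t, q s = p s := fun s hs =>
    Function.update_of_ne (ne_of_mem_erase hs) _ _
  have hsplit : ∀ g : ι → R, ∏ s, g s = g t * ∏ s ∈ univ.erase t, g s := fun g =>
    (mul_prod_erase univ g (mem_univ t)).symm
  calc ∑ f : ι → α, (∏ s, p s (f s)) * h (f t)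
      = ∑ f : ι → α, ∏ s, q s (f s) := Fintype.sum_congr _ _ fun f => by
        rw [hsplit, hsplit fun s => q s (f s), show ∏ s ∈ univ.erase t, q s (f s)
          = ∏ s ∈ univ.erase t, p s (f s) from Finset.prod_congr rfl fun s hs => by rw [hq s hs]]
        simp only [q, Function.update_self]
        ring
    _ = ∏ s, ∑ a, q s a := (Fintype.prod_sum q).symm
    _ = (∑ a, p t a * h a) * ∏ s ∈ univ.erase t, ∑ a, p s a := by
        rw [hsplit, show ∏ s ∈ univ.erase t, ∑ a, q s a = ∏ s ∈ univ.erase t, ∑ a, p s a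
          from Finset.prod_congr rfl fun s hs => by rw [hq s hs]]
        simp only [q, Function.update_self]

lemma mul_log_prod_eq_sum {ι : Type*} (s : Finset ι) (p : ι → ℝ) :
    (∏ i ∈ s, p i) * Real.log (∏ i ∈ s, p i) = ∑ i ∈ s, (∏ j ∈ s, p j) * Real.log (p i) := by
  by_cases hp : ∀ i ∈ s, p i ≠ 0
  · rw [Real.log_prod hp, mul_sum]
  · obtain ⟨i, hi, hpi⟩ : ∃ i ∈ s, p i = 0 := by simpa using hp
    simp [prod_eq_zero hi hpi]

section Independence

variable {Ω ι α : Type*} [Fintype Ω] [Fintype ι] [DecidableEq ι] [Fintype α] [DecidableEq α]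

lemma prod_sum_eq_one_of_pr_pi_eq_prod (μ : Ω → ℝ) (hμ : ∑ ω, μ ω = 1) (X : ι → Ω → α)
    (ρ : ι → α → ℝ) (hρ : ∀ f, pr μ (fun ω i => X i ω) f = ∏ i, ρ i (f i)) :
    ∏ i, ∑ a, ρ i a = 1 := by
  rw [Fintype.prod_sum, ← Fintype.sum_congr _ _ hρ, sum_pr, hμ]

lemma pr_eq_div_of_pr_pi_eq_prod (μ : Ω → ℝ) (hμ : ∑ ω, μ ω = 1) (X : ι → Ω → α)
    (ρ : ι → α → ℝ) (hρ : ∀ f, pr μ (fun ω i => X i ω) f = ∏ i, ρ i (f i)) (t : ι) (x : α) :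
    pr μ (X t) x = ρ t x / ∑ a, ρ t a := by
  have hrest : ∏ i ∈ univ.erase t, ∑ a, ρ i a = (∑ a, ρ t a)⁻¹ :=
    eq_inv_of_mul_eq_one_right <| by
      rw [mul_prod_erase univ (fun i => ∑ a, ρ i a) (mem_univ t),
        prod_sum_eq_one_of_pr_pi_eq_prod μ hμ X ρ hρ]
  calc pr μ (X t) x
      = ∑ f : ι → α, if f t = x then pr μ (fun ω i => X i ω) f else 0 :=
        pr_comp μ (fun ω i => X i ω) (fun f => f t) x
    _ = ∑ f : ι → α, (∏ i, ρ i (f i)) * if f t = x then 1 else 0 := by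
        simp [hρ]
    _ = ρ t x / ∑ a, ρ t a := by
        rw [Fintype.sum_prod_mul_apply ρ t (fun a => if a = x then 1 else 0), hrest]
        simp [div_eq_mul_inv]

lemma pr_pi_eq_prod_pr_of_eq_prod (μ : Ω → ℝ) (hμ : ∑ ω, μ ω = 1) (X : ι → Ω → α)
    (ρ : ι → α → ℝ) (hρ : ∀ f, pr μ (fun ω i => X i ω) f = ∏ i, ρ i (f i)) (f : ι → α) :
    pr μ (fun ω i => X i ω) f = ∏ i, pr μ (X i) (f i) := by
  simp only [pr_eq_div_of_pr_pi_eq_prod μ hμ X ρ hρ, prod_div_distrib,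
    prod_sum_eq_one_of_pr_pi_eq_prod μ hμ X ρ hρ, div_one, hρ]

lemma Hent_pi_eq_sum_of_indep (μ : Ω → ℝ) (hμ : ∑ ω, μ ω = 1) (X : ι → Ω → α)
    (hX : ∀ f, pr μ (fun ω i => X i ω) f = ∏ i, pr μ (X i) (f i)) :
    Hent μ (fun ω i => X i ω) = ∑ i, Hent μ (X i) := by
  have hmass : ∀ i, ∑ a, pr μ (X i) a = 1 := fun i => (sum_pr μ (X i)).trans hμ
  simp only [Hent, hX, mul_log_prod_eq_sum]
  rw [sum_comm, ← sum_neg_distrib]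
  refine Fintype.sum_congr _ _ fun i => ?_
  rw [Fintype.sum_prod_mul_apply (fun i => pr μ (X i)) i (fun a => Real.log (pr μ (X i) a))]
  simp [hmass]

end Independence

lemma fun_preIdx_eq_iff {Ω γ : Type*} {T : ℕ} (Z : Fin T → Ω → γ) (t : Fin T) (ω ω' : Ω) :
    ((fun s => Z (preIdx t s) ω) = fun s => Z (preIdx t s) ω') ↔
      ∀ i : Fin T, i.val < t.val → Z i ω = Z i ω' :=
  funext_iff.trans ⟨fun h i hi => h ⟨i, hi⟩, fun h s => h _ s.isLt⟩

lemma fun_sufIdx_eq_iff {Ω γ : Type*} {T : ℕ} (Z : Fin T → Ω → γ) (t : Fin T) (ω ω' : Ω) :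
    ((fun s => Z (sufIdx t s) ω) = fun s => Z (sufIdx t s) ω') ↔
      ∀ i : Fin T, t.val < i.val → Z i ω = Z i ω' := by
  refine funext_iff.trans ⟨fun h i hi => ?_, fun h s => h _ (by simp [sufIdx]; omega)⟩
  simpa [sufIdx, Nat.add_sub_cancel' hi] using h ⟨i.val - (t.val + 1), by omega⟩

lemma Fin.forall_iff_forall_lt_and_forall_gt {T : ℕ} (t : Fin T) {P : Fin T → Prop} :
    (∀ i, P i) ↔ (∀ i : Fin T, i.val < t.val → P i) ∧ P t ∧ ∀ i : Fin T, t.val < i.val → P i := by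
  refine ⟨fun h => ⟨fun i _ => h i, h t, fun i _ => h i⟩, fun ⟨hlt, ht, hgt⟩ i => ?_⟩
  rcases lt_trichotomy i t with h | rfl | h
  exacts [hlt i h, ht, hgt i h]

lemma Fin.forall_val_lt_succ_iff {T : ℕ} (t : Fin T) {P : Fin T → Prop} :
    (∀ i : Fin T, i.val < t.val + 1 → P i) ↔ (∀ i : Fin T, i.val < t.val → P i) ∧ P t := by
  refine ⟨fun h => ⟨fun i hi => h i (by omega), h t (by omega)⟩, fun ⟨hlt, ht⟩ i hi => ?_⟩
  rcases Nat.lt_succ_iff_lt_or_eq.mp hi with h | h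
  exacts [hlt i h, Fin.ext h ▸ ht]

section ChainRule

variable {Ω A B : Type*} [Fintype Ω] [Fintype A] [DecidableEq A] [Fintype B] [DecidableEq B]
  {T : ℕ} (μ : Ω → ℝ) (X : Fin T → Ω → A) (Y : Fin T → Ω → B)

noncomputable def Hprefix (n : ℕ) : ℝ :=
  Hent μ (fun ω =>
    (fun i : {i : Fin T // i.val < n} => X i ω, fun i : {i : Fin T // i.val < n} => Y i ω))

noncomputable def HstatesPrefix (n : ℕ) : ℝ :=
  Hent μ (fun ω => (fun i => X i ω, fun i : {i : Fin T // i.val < n} => Y i ω))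

lemma Hprefix_zero (hμ : ∑ ω, μ ω = 1) : Hprefix μ X Y 0 = 0 :=
  have : IsEmpty {i : Fin T // i.val < 0} := ⟨fun i => Nat.not_lt_zero _ i.2⟩
  Hent_of_subsingleton μ hμ _

lemma HstatesPrefix_zero : HstatesPrefix μ X Y 0 = Hent μ (fun ω i => X i ω) :=
  Hent_congr_of_eq_iff μ _ _ fun ω ω' => by simp [Prod.ext_iff, funext_iff]

lemma HstatesPrefix_eq_Hprefix : HstatesPrefix μ X Y T = Hprefix μ X Y T :=
  Hent_congr_of_eq_iff μ _ _ fun ω ω' => by simp [Prod.ext_iff, funext_iff]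

lemma Hent_past (t : Fin T) :
    Hent μ (fun ω => (fun s => X (preIdx t s) ω, fun s => Y (preIdx t s) ω))
      = Hprefix μ X Y t := by
  refine Hent_congr_of_eq_iff μ _ _ fun ω ω' => ?_
  simp only [Prod.ext_iff, fun_preIdx_eq_iff]
  simp only [funext_iff, Subtype.forall]

lemma Hent_present_past (t : Fin T) :
    Hent μ (fun ω => ((X t ω, Y t ω), (fun s => X (preIdx t s) ω, fun s => Y (preIdx t s) ω)))
      = Hprefix μ X Y (t + 1) := by
  refine Hent_congr_of_eq_iff μ _ _ fun ω ω' => ?_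
  simp only [Prod.ext_iff, fun_preIdx_eq_iff]
  simp only [funext_iff, Subtype.forall, Fin.forall_val_lt_succ_iff]
  tauto

lemma Hent_present_past_future (t : Fin T) :
    Hent μ (fun ω => (X t ω, ((fun s => X (preIdx t s) ω, fun s => Y (preIdx t s) ω),
      fun s => X (sufIdx t s) ω))) = HstatesPrefix μ X Y t := by
  refine Hent_congr_of_eq_iff μ _ _ fun ω ω' => ?_
  simp only [Prod.ext_iff, fun_preIdx_eq_iff, fun_sufIdx_eq_iff]
  simp only [funext_iff, Subtype.forall,
    Fin.forall_iff_forall_lt_and_forall_gt t (P := fun i => X i ω = X i ω')]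
  tauto

lemma Hent_future_present_past (t : Fin T) :
    Hent μ (fun ω => ((fun s => X (sufIdx t s) ω, (X t ω, Y t ω)),
      (fun s => X (preIdx t s) ω, fun s => Y (preIdx t s) ω))) = HstatesPrefix μ X Y (t + 1) := by
  refine Hent_congr_of_eq_iff μ _ _ fun ω ω' => ?_
  simp only [Prod.ext_iff, fun_preIdx_eq_iff, fun_sufIdx_eq_iff]
  simp only [funext_iff, Subtype.forall, Fin.forall_val_lt_succ_iff,
    Fin.forall_iff_forall_lt_and_forall_gt t (P := fun i => X i ω = X i ω')]
  tauto

lemma MI_sub_condMI_eq (t : Fin T) :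
    MI μ (X t) (fun ω => ((fun s => X (preIdx t s) ω, fun s => Y (preIdx t s) ω),
        fun s => X (sufIdx t s) ω))
      - condMI μ (fun ω s => X (sufIdx t s) ω) (fun ω => (X t ω, Y t ω))
          (fun ω => (fun s => X (preIdx t s) ω, fun s => Y (preIdx t s) ω))
      = Hent μ (X t) + (Hprefix μ X Y t - Hprefix μ X Y (t + 1))
          - (HstatesPrefix μ X Y t - HstatesPrefix μ X Y (t + 1)) := by
  simp only [MI, condMI, condH]
  rw [Hent_prod_comm μ (fun ω => (fun s => X (preIdx t s) ω, fun s => Y (preIdx t s) ω)),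
    Hent_past, Hent_present_past, Hent_present_past_future, Hent_future_present_past]
  ring

end ChainRule

lemma Fin.sum_sub_succ {M : Type*} [AddCommGroup M] (T : ℕ) (f : ℕ → M) :
    ∑ t : Fin T, (f t - f (t + 1)) = f 0 - f T := by
  rw [Fin.sum_univ_eq_sum_range (fun i => f i - f (i + 1)), sum_range_sub']

theorem iid_chain_rule_identity_general
    {Ω A B : Type*} [Fintype Ω] [Fintype A] [DecidableEq A]
    [Fintype B] [DecidableEq B] {T : ℕ}
    (μ : Ω → ℝ) (hμ1 : ∑ ω, μ ω = 1)
    (X0 : Fin T → Ω → A) (Y : Fin T → Ω → B)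
    (ρ : A → ℝ)
    -- the sequence X₀^T is i.i.d. with common law ρ
    (hiid : ∀ f : Fin T → A,
      pr μ (fun ω => fun t => X0 t ω) f = ∏ t, ρ (f t)) :
    (∑ t : Fin T, MI μ (X0 t)
        (fun ω => ((fun s => X0 (preIdx t s) ω, fun s => Y (preIdx t s) ω),
                   fun s => X0 (sufIdx t s) ω)))
      = ∑ t : Fin T, condMI μ
          (fun ω => fun s => X0 (sufIdx t s) ω)
          (fun ω => (X0 t ω, Y t ω))
          (fun ω => (fun s => X0 (preIdx t s) ω, fun s => Y (preIdx t s) ω)) := by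
  have hindep : Hent μ (fun ω t => X0 t ω) = ∑ t, Hent μ (X0 t) :=
    Hent_pi_eq_sum_of_indep μ hμ1 X0 (pr_pi_eq_prod_pr_of_eq_prod μ hμ1 X0 (fun _ => ρ) hiid)
  rw [← sub_eq_zero, ← sum_sub_distrib, Fintype.sum_congr _ _ (MI_sub_condMI_eq μ X0 Y),
    sum_sub_distrib, sum_add_distrib, Fin.sum_sub_succ, Fin.sum_sub_succ, Hprefix_zero μ X0 Y hμ1,
    HstatesPrefix_zero, HstatesPrefix_eq_Hprefix, hindep]
  ring

/-- Chain-rule identity for i.i.d. state sequences: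
`∑ₜ I(X₀ₜ; X₀^{t−1}, Y^{t−1}, X₀ₜ₊₁^T) = ∑ₜ I(X₀ₜ₊₁^T; (X₀ₜ, Yₜ) | X₀^{t−1}, Y^{t−1})`. -/
theorem iid_chain_rule_identity
    {Ω A B : Type*} [Fintype Ω] [Fintype A] [DecidableEq A]
    [Fintype B] [DecidableEq B] {T : ℕ}
    (μ : Ω → ℝ) (hμ0 : ∀ ω, 0 ≤ μ ω) (hμ1 : ∑ ω, μ ω = 1)
    (X0 : Fin T → Ω → A) (Y : Fin T → Ω → B)
    (ρ : A → ℝ)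
    -- the sequence X₀^T is i.i.d. with common law ρ
    (hiid : ∀ f : Fin T → A,
      pr μ (fun ω => fun t => X0 t ω) f = ∏ t, ρ (f t)) :
    (∑ t : Fin T, MI μ (X0 t)
        (fun ω => ((fun s => X0 (preIdx t s) ω, fun s => Y (preIdx t s) ω),
                   fun s => X0 (sufIdx t s) ω)))
      = ∑ t : Fin T, condMI μ
          (fun ω => fun s => X0 (sufIdx t s) ω)
          (fun ω => (X0 t ω, Y t ω))
          (fun ω => (fun s => X0 (preIdx t s) ω, fun s => Y (preIdx t s) ω)) :=
  iid_chain_rule_identity_general μ hμ1 X0 Y ρ hiid
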